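/- arXiv:0902.1834 — 2 statements merged into one kernel-verified Lean document; each statement's English description precedes it below -/
import Mathlib

section
/- In any configuration of 4 robots on a ring of n nodes, if the configuration contains an arrow then the arrow is unique, and the size of any arrow is at least 1 and at most n - 4. -/
/-!
Read the ring from the tail `i` of an arrow of size `x`: the offsets `0, …, x` carry at most one
robot and the offset `-1` none, so the tower (offset `x + 1`, two robots) and the head (offset
`x + 2`, one robot) must avoid all of them modulo `n`, which forces `x + 3 < n`.

For uniqueness, tail, tower and head are then distinct and already carry all 4 robots, so every
other node is free. A second tail is a node with one robot preceded by a free node; the head is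
preceded by the tower, so the tail is shared, and then so is the tower, which fixes the size.
-/

/-- An arrow of size `x` with tail at node `i`: the tail is occupied by one robot, the `x`
following nodes are free, then a tower of 2 robots, then the head occupied by one robot;
maximality: the node just before the tail is free. -/
def ArrowAt (n : ℕ) (f : ZMod n → ℕ) (i : ZMod n) (x : ℕ) : Prop :=
  1 ≤ x ∧ f (i - 1) = 0 ∧ f i = 1 ∧
  (∀ j : ℕ, 1 ≤ j → j ≤ x → f (i + (j : ZMod n)) = 0) ∧
  f (i + ((x + 1 : ℕ) : ZMod n)) = 2 ∧ f (i + ((x + 2 : ℕ) : ZMod n)) = 1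

theorem Finset.eq_zero_of_sum_univ_eq_sum {α : Type*} [Fintype α] [DecidableEq α]
    {f : α → ℕ} {s : Finset α} (hs : ∑ v, f v = ∑ v ∈ s, f v) {v : α} (hv : v ∉ s) : f v = 0 := by
  have hle : ∑ w ∈ insert v s, f w ≤ ∑ w, f w := Finset.sum_le_sum_of_subset (subset_univ _)
  rw [Finset.sum_insert hv, hs] at hle
  omega

theorem ZMod.natCast_eq_neg_one_of_add_one_eq {n k : ℕ} (hk : k + 1 = n) :
    (k : ZMod n) = -1 :=
  eq_neg_of_add_eq_zero_left (by rw [← Nat.cast_add_one, hk, ZMod.natCast_self])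

namespace ArrowAt

variable {n : ℕ} {f : ZMod n → ℕ} {i : ZMod n} {x : ℕ}

theorem add_one_ne_of_apply_ne_zero (ha : ArrowAt n f i x) {k : ℕ} (hk : f (i + k) ≠ 0) :
    k + 1 ≠ n := by
  obtain ⟨-, hf_prev, -, -, -, -⟩ := ha
  intro hkn
  rw [ZMod.natCast_eq_neg_one_of_add_one_eq hkn, ← sub_eq_add_neg, hf_prev] at hk
  exact hk rfl

theorem apply_add_natCast_le_one (ha : ArrowAt n f i x) {k : ℕ} (hk : k % n ≤ x) :
    f (i + k) ≤ 1 := by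
  obtain ⟨-, -, htail, hfree, -, -⟩ := ha
  rw [← ZMod.natCast_mod k n]
  rcases Nat.eq_zero_or_pos (k % n) with hk0 | hk0
  · rw [hk0, Nat.cast_zero, add_zero, htail]
  · rw [hfree _ hk0 hk]
    exact zero_le_one

variable [NeZero n]

theorem add_one_lt (ha : ArrowAt n f i x) : x + 1 < n := by
  have ⟨_, _, _, _, hf_tower, _⟩ := ha
  by_contra! hn
  have hmod : (x + 1) % n ≤ x := by
    have := Nat.mod_lt (x + 1) (NeZero.pos n)
    omega
  have := ha.apply_add_natCast_le_one hmod
  rw [hf_tower] at this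
  omega

theorem add_three_lt (ha : ArrowAt n f i x) : x + 3 < n := by
  have ⟨_, _, _, _, hf_tower, hf_head⟩ := ha
  have := ha.add_one_lt
  have htower := ha.add_one_ne_of_apply_ne_zero (k := x + 1) (by rw [hf_tower]; norm_num)
  have hhead := ha.add_one_ne_of_apply_ne_zero (k := x + 2) (by rw [hf_head]; norm_num)
  omega

theorem le_sub_four (ha : ArrowAt n f i x) : x ≤ n - 4 := by
  have := ha.add_three_lt
  omega

theorem natCast_add_two_ne_zero (ha : ArrowAt n f i x) : ((x + 2 : ℕ) : ZMod n) ≠ 0 := by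
  rw [Ne, ZMod.natCast_eq_zero_iff]
  exact Nat.not_dvd_of_pos_of_lt (Nat.succ_pos _) (by linarith [ha.add_three_lt])

theorem apply_eq_zero_of_ne (ha : ArrowAt n f i x) (hsum : ∑ v, f v = 4) {v : ZMod n}
    (htail : v ≠ i) (htower : v ≠ i + ((x + 1 : ℕ) : ZMod n))
    (hhead : v ≠ i + ((x + 2 : ℕ) : ZMod n)) :
    f v = 0 := by
  classical
  have htail_head : i ≠ i + ((x + 2 : ℕ) : ZMod n) :=
    fun h => ha.natCast_add_two_ne_zero (left_eq_add.mp h)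
  obtain ⟨-, -, hf_tail, -, hf_tower, hf_head⟩ := ha
  have htail_tower : i ≠ i + ((x + 1 : ℕ) : ZMod n) :=
    ne_of_apply_ne f (by rw [hf_tail, hf_tower]; decide)
  have htower_head : i + ((x + 1 : ℕ) : ZMod n) ≠ i + ((x + 2 : ℕ) : ZMod n) :=
    ne_of_apply_ne f (by rw [hf_tower, hf_head]; decide)
  refine Finset.eq_zero_of_sum_univ_eq_sum (s := {i, i + ((x + 1 : ℕ) : ZMod n),
    i + ((x + 2 : ℕ) : ZMod n)}) ?_ ?_
  · have htail_notMem : i ∉ ({i + ((x + 1 : ℕ) : ZMod n), i + ((x + 2 : ℕ) : ZMod n)} :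
        Finset (ZMod n)) := by
      simp only [Finset.mem_insert, Finset.mem_singleton, not_or]
      exact ⟨htail_tower, htail_head⟩
    rw [Finset.sum_insert htail_notMem, Finset.sum_pair htower_head, hf_tail, hf_tower, hf_head,
      hsum]
    rfl
  · simp only [Finset.mem_insert, Finset.mem_singleton, not_or]
    exact ⟨htail, htower, hhead⟩

theorem eq_tower_of_apply_eq_two (ha : ArrowAt n f i x) (hsum : ∑ v, f v = 4) {v : ZMod n}
    (hv : f v = 2) : v = i + ((x + 1 : ℕ) : ZMod n) := by
  have ⟨_, _, hf_tail, _, _, hf_head⟩ := ha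
  by_contra htower
  have := ha.apply_eq_zero_of_ne hsum (ne_of_apply_ne f (by rw [hv, hf_tail]; decide))
    htower (ne_of_apply_ne f (by rw [hv, hf_head]; decide))
  omega

theorem tail_eq {i' : ZMod n} {x' : ℕ} (ha : ArrowAt n f i x) (ha' : ArrowAt n f i' x')
    (hsum : ∑ v, f v = 4) : i' = i := by
  have ⟨_, hf_prev', hf_tail', _, _, _⟩ := ha'
  have ⟨_, _, _, _, hf_tower, _⟩ := ha
  by_contra htail
  have hhead : i' = i + ((x + 2 : ℕ) : ZMod n) := by
    by_contra hhead
    have := ha.apply_eq_zero_of_ne hsum htail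
      (ne_of_apply_ne f (by rw [hf_tail', hf_tower]; decide)) hhead
    omega
  have hprev : i' - 1 = i + ((x + 1 : ℕ) : ZMod n) := by
    rw [hhead]
    push_cast
    ring
  rw [hprev, hf_tower] at hf_prev'
  exact two_ne_zero hf_prev'

theorem size_eq {x' : ℕ} (ha : ArrowAt n f i x) (ha' : ArrowAt n f i x')
    (hsum : ∑ v, f v = 4) : x' = x := by
  have ⟨_, _, _, _, hf_tower', _⟩ := ha'
  have htower := ha.eq_tower_of_apply_eq_two hsum hf_tower'
  rw [add_right_inj, ZMod.natCast_eq_natCast_iff', Nat.mod_eq_of_lt ha'.add_one_lt,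
    Nat.mod_eq_of_lt ha.add_one_lt] at htower
  omega

end ArrowAt

theorem stmt6_general (n : ℕ) [NeZero n] (f : ZMod n → ℕ)
    (hsum : ∑ v : ZMod n, f v = 4) :
    (∀ i x, ArrowAt n f i x → 1 ≤ x ∧ x ≤ n - 4) ∧
    (∀ i x i' x', ArrowAt n f i x → ArrowAt n f i' x' → i = i' ∧ x = x') := by
  refine ⟨fun i x ha => ⟨ha.1, ha.le_sub_four⟩, fun i x i' x' ha ha' => ?_⟩
  obtain rfl := ha.tail_eq ha' hsum
  exact ⟨rfl, (ha.size_eq ha' hsum).symm⟩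

/-- in any configuration of 4 robots on an `n`-ring, an arrow has size between
`1` and `n - 4`, and if the configuration contains an arrow then the arrow is unique. -/
theorem stmt6 (n : ℕ) [NeZero n] (hn : 5 ≤ n) (f : ZMod n → ℕ)
    (hsum : ∑ v : ZMod n, f v = 4) :
    (∀ i x, ArrowAt n f i x → 1 ≤ x ∧ x ≤ n - 4) ∧
    (∀ i x i' x', ArrowAt n f i x → ArrowAt n f i' x' → i = i' ∧ x = x') :=
  stmt6_general n f hsum
end

section
/- Starting from an arrow of size x (1 ≤ x < n - 4) on a ring of n nodes, moving the robot at the arrow tail one step through the hole separating the tail from the arrow head yields a configuration containing an arrow of size x + 1. -/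
theorem ZMod.intCast_eq_intCast_iff_of_abs_sub_lt {n : ℕ} {k l : ℤ} (h : |k - l| < n) :
    (k : ZMod n) = l ↔ k = l := by
  refine ⟨fun hkl => ?_, congrArg _⟩
  have hdvd := (ZMod.intCast_eq_intCast_iff_dvd_sub l k n).mp hkl.symm
  linarith [Int.eq_zero_of_abs_lt_dvd hdvd h]

def arrowProfile (x : ℕ) (k : ℤ) : ℕ :=
  if k = 0 ∨ k = x + 2 then 1 else if k = x + 1 then 2 else 0

theorem arrowProfile_succ_add_one {x : ℕ} {k : ℤ} (hk : k ≠ -1) (hk₀ : k ≠ 0) :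
    arrowProfile (x + 1) (k + 1) = arrowProfile x k := by
  unfold arrowProfile
  push_cast
  split_ifs <;> omega

section
variable {n : ℕ} {f : ZMod n → ℕ} {i : ZMod n} {x : ℕ}

theorem arrowAt_iff : ArrowAt n f i x ↔
    1 ≤ x ∧ ∀ k : ℤ, -1 ≤ k → k ≤ x + 2 → f (i + k) = arrowProfile x k := by
  constructor
  · rintro ⟨hx, hprev, htail, hgap, htower, hhead⟩
    refine ⟨hx, fun k hk₁ hk₂ => ?_⟩
    rcases (by omega : k = -1 ∨ k = 0 ∨ (1 ≤ k ∧ k ≤ x) ∨ k = x + 1 ∨ k = x + 2) with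
      rfl | rfl | ⟨hk₁, hk₂⟩ | rfl | rfl
    · simpa (disch := omega) [arrowProfile, if_neg, ← sub_eq_add_neg] using hprev
    · simpa (disch := omega) [arrowProfile, if_neg] using htail
    · lift k to ℕ using (by omega)
      rw [arrowProfile, if_neg (by omega), if_neg (by omega), Int.cast_natCast]
      exact hgap k (by omega) (by omega)
    · simpa (disch := omega) [arrowProfile, if_neg] using htower
    · simpa (disch := omega) [arrowProfile, if_neg] using hhead
  · rintro ⟨hx, hf⟩
    refine ⟨hx, ?_, ?_, fun j hj₁ hj₂ => ?_, ?_, ?_⟩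
    · simpa (disch := omega) [arrowProfile, if_neg, ← sub_eq_add_neg] using
        hf (-1) le_rfl (by omega)
    · simpa (disch := omega) [arrowProfile, if_neg] using hf 0 (by omega) (by omega)
    · simpa (disch := omega) [arrowProfile, if_neg] using hf j (by omega) (by omega)
    · simpa (disch := omega) [arrowProfile, if_neg] using hf (x + 1) (by omega) (by omega)
    · simpa (disch := omega) [arrowProfile, if_neg] using hf (x + 2) (by omega) (by omega)

theorem ArrowAt.apply_add_intCast_eq_zero [NeZero n] (h : ArrowAt n f i x) (hsum : ∑ v, f v = 4)
    {k : ℤ} (hk : k < -1) (hkn : x + 2 - n < k) : f (i + k) = 0 := by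
  obtain ⟨-, hf⟩ := arrowAt_iff.mp h
  set S : Finset ℤ := {k, 0, (x : ℤ) + 1, (x : ℤ) + 2}
  have hinj : Set.InjOn (fun l : ℤ => i + l) S := by
    intro a ha b hb hab
    simp only [S, Finset.coe_insert, Finset.coe_singleton, Set.mem_insert_iff,
      Set.mem_singleton_iff] at ha hb
    exact (ZMod.intCast_eq_intCast_iff_of_abs_sub_lt (by rw [abs_lt]; omega)).mp
      (add_left_cancel hab)
  have hle : ∑ l ∈ S, f (i + l) ≤ 4 := by
    rw [← hsum, ← Finset.sum_image hinj]
    exact Finset.sum_le_univ_sum_of_nonneg fun _ => Nat.zero_le _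
  have hS : ∑ l ∈ S, f (i + l) = f (i + k) + 4 := by
    rw [Finset.sum_insert (by simp only [Finset.mem_insert, Finset.mem_singleton]; omega),
      Finset.sum_insert (by simp only [Finset.mem_insert, Finset.mem_singleton]; omega),
      Finset.sum_pair (by omega), hf 0 (by omega) (by omega), hf (x + 1) (by omega) (by omega),
      hf (x + 2) (by omega) (by omega)]
    simp (disch := omega) [arrowProfile, if_neg]
  omega

theorem apply_add_intCast_of_move {g : ZMod n → ℕ}
    (hg : ∀ v, g v = if v = i then f v - 1 else if v = i - 1 then f v + 1 else f v)
    {k : ℤ} (hk : -n < k) (hkn : k + 1 < n) :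
    g (i + k) = if k = 0 then f (i + k) - 1 else if k = -1 then f (i + k) + 1 else f (i + k) := by
  have htail : i + (k : ZMod n) = i ↔ k = 0 := by
    rw [add_eq_left, ← Int.cast_zero,
      ZMod.intCast_eq_intCast_iff_of_abs_sub_lt (by rw [abs_lt]; omega)]
  have hprev : i + (k : ZMod n) = i - 1 ↔ k = -1 := by
    rw [sub_eq_add_neg, add_right_inj, ← Int.cast_one, ← Int.cast_neg,
      ZMod.intCast_eq_intCast_iff_of_abs_sub_lt (by rw [abs_lt]; omega)]
  simp only [hg, htail, hprev]

end

theorem stmt10_general (n : ℕ) [NeZero n] (f : ZMod n → ℕ)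
    (hsum : ∑ v : ZMod n, f v = 4) (i : ZMod n) (x : ℕ)
    (hxn : x + 1 ≤ n - 4)
    (harrow : ArrowAt n f i x)
    (g : ZMod n → ℕ)
    (hg : ∀ v, g v = if v = i then f v - 1 else if v = i - 1 then f v + 1 else f v) :
    ArrowAt n g (i - 1) (x + 1) := by
  have hfree : f (i + ((-2 : ℤ) : ZMod n)) = 0 :=
    harrow.apply_add_intCast_eq_zero hsum (by norm_num) (by omega)
  obtain ⟨-, hf⟩ := arrowAt_iff.mp harrow
  refine arrowAt_iff.mpr ⟨by omega, fun k hk₁ hk₂ => ?_⟩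
  obtain ⟨k, rfl⟩ : ∃ l : ℤ, k = l + 1 := ⟨k - 1, by ring⟩
  have hnode : i - 1 + ((k + 1 : ℤ) : ZMod n) = i + k := by push_cast; ring
  rw [hnode, apply_add_intCast_of_move hg (by omega) (by omega)]
  rcases (by omega : k = -2 ∨ k = -1 ∨ k = 0 ∨ 1 ≤ k) with rfl | rfl | rfl | hk
  · simpa (disch := omega) [arrowProfile, if_neg] using hfree
  · rw [if_neg (by omega), if_pos rfl, hf (-1) le_rfl (by omega)]
    simp (disch := omega) [arrowProfile, if_neg]
  · rw [if_pos rfl, hf 0 (by omega) (by omega)]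
    simp (disch := omega) [arrowProfile, if_neg]
  · rw [if_neg (by omega), if_neg (by omega), hf k (by omega) (by omega),
      arrowProfile_succ_add_one (by omega) (by omega)]

/-- moving the tail robot of a non-final arrow of size `x` one step through the
hole separating the tail from the head yields an arrow of size `x + 1`. -/
theorem stmt10 (n : ℕ) [NeZero n] (hn : 6 ≤ n) (f : ZMod n → ℕ)
    (hsum : ∑ v : ZMod n, f v = 4) (i : ZMod n) (x : ℕ)
    (hx : 1 ≤ x) (hxn : x + 1 ≤ n - 4)
    (harrow : ArrowAt n f i x)
    (g : ZMod n → ℕ)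
    (hg : ∀ v, g v = if v = i then f v - 1 else if v = i - 1 then f v + 1 else f v) :
    ArrowAt n g (i - 1) (x + 1) :=
  stmt10_general n f hsum i x hxn harrow g hg
end
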